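/- Cutting-set separation property: in the cutting-set procedure for the robust constraint H(x + δ) ≥ τ' for all δ ∈ U, if H is G-Lipschitz and iterate x^(t) satisfies the constraints for all previously found scenarios δ^(1),…,δ^(t−1) while each earlier iterate x^(s) (s < t) had a violation τ' − H(x^(s) + δ^(s)) > ε, then ‖x^(t) − x^(s)‖ ≥ ε/G for all s < t. -/

import Mathlib

theorem div_le_norm_sub_of_add_le {E : Type*} [SeminormedAddCommGroup E] {H : E → ℝ} {G ε : ℝ}
    (hG : 0 < G) (hLip : ∀ u v : E, |H u - H v| ≤ G * ‖u - v‖) {u v : E}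
    (hgap : H v + ε ≤ H u) : ε / G ≤ ‖u - v‖ := by
  rw [div_le_iff₀' hG]
  calc ε ≤ H u - H v := by linarith
    _ ≤ |H u - H v| := le_abs_self _
    _ ≤ G * ‖u - v‖ := hLip u v

theorem cutting_set_separation_general {E : Type*} [NormedAddCommGroup E]
    (H : E → ℝ) (G : ℝ) (hG : 0 < G)
    (hLip : ∀ u v : E, |H u - H v| ≤ G * ‖u - v‖)
    (τ' ε : ℝ)
    (x δ : ℕ → E) (t : ℕ)
    (hviol : ∀ s < t, H (x s + δ s) < τ' - ε)
    (hsat : ∀ s < t, τ' ≤ H (x t + δ s)) :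
    ∀ s < t, ε / G ≤ ‖x t - x s‖ := by
  intro s hs
  have hgap : H (x s + δ s) + ε ≤ H (x t + δ s) := by linarith [hviol s hs, hsat s hs]
  simpa only [add_sub_add_right_eq_sub] using div_le_norm_sub_of_add_le hG hLip hgap

/-- Cutting-set separation property: if `H` is `G`-Lipschitz, each earlier iterate `x s`
(`s < t`) had violation `τ' - H (x s + δ s) > ε` for its scenario `δ s ∈ U`, and the
current iterate `x t` satisfies `H (x t + δ s) ≥ τ'` for all `s < t`, then
`‖x t - x s‖ ≥ ε / G` for all `s < t`. -/
theorem cutting_set_separation {E : Type*} [NormedAddCommGroup E] [NormedSpace ℝ E]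
    (H : E → ℝ) (G : ℝ) (hG : 0 < G)
    (hLip : ∀ u v : E, |H u - H v| ≤ G * ‖u - v‖)
    (τ' ε : ℝ) (hε : 0 < ε) (U : Set E)
    (x δ : ℕ → E) (t : ℕ)
    (hδU : ∀ s, δ s ∈ U)
    (hviol : ∀ s < t, H (x s + δ s) < τ' - ε)
    (hsat : ∀ s < t, τ' ≤ H (x t + δ s)) :
    ∀ s < t, ε / G ≤ ‖x t - x s‖ :=
  cutting_set_separation_general H G hG hLip τ' ε x δ t hviol hsat
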